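/- arXiv:1212.0899 — 7 statements merged into one kernel-verified Lean document; each statement's English description precedes it below -/
import Mathlib

section
/- Let X be a separable metric space, A a subset of X, K a separable metric ANR, and f : A → K a continuous map. Then for every ε > 0 there exist an open set U ⊆ X with A ⊆ U and a continuous map g : U → K such that g(U) is contained in the ε-neighborhood of f(A) in K, and the restriction g|_A is homotopic to f. -/
open Set Metric TopologicalSpace

/-- A metrizable space `K` is an ANR (absolute neighborhood retract) if, whenever it
is embedded as a closed subspace of a metrizable space, it is a retract of some open
neighborhood of itself. -/
def IsANR (K : Type u) [TopologicalSpace K] : Prop :=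
  MetrizableSpace K ∧
    ∀ (Z : Type u) [MetricSpace Z] (e : K → Z), Topology.IsClosedEmbedding e →
      ∃ (U : Set Z) (_ : IsOpen U) (hU : ∀ x, e x ∈ U) (r : C(U, K)),
        ∀ x : K, r ⟨e x, hU x⟩ = x

/-! Kuratowski's map `x ↦ dist x · - dist x₀ ·` embeds `K` isometrically into the Banach space
`K →ᵇ ℝ`, and Wojdysławski's estimate shows that the image is closed in its convex hull `C`. The
ANR property then gives an open `V ⊆ C` around `K` with a retraction `r : V → K`. A partition of
unity on a neighbourhood `U` of `A` glues the points `f a` into a map `F : U → C` that is near each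
point uniformly close to a single `f a`, and small enough balls of `C` around `K` lie in `V` and are
moved little by `r`. So `g = r ∘ F` lands near `f(A)`, and the straight-line homotopy from `F|_A`
to `f` stays in `V`, where `r` pushes it into `K`. -/

open Topology

open scoped BoundedContinuousFunction

section Kuratowski

variable {K : Type*} [PseudoMetricSpace K]

noncomputable def kuratowskiBounded (x₀ x : K) : K →ᵇ ℝ :=
  .ofNormedAddCommGroup (fun y => dist x y - dist x₀ y) (by fun_prop) (dist x x₀)
    fun y => abs_dist_sub_le x x₀ y

theorem kuratowskiBounded_apply (x₀ x y : K) :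
    kuratowskiBounded x₀ x y = dist x y - dist x₀ y := rfl

theorem isometry_kuratowskiBounded (x₀ : K) : Isometry (kuratowskiBounded x₀) := by
  refine Isometry.of_dist_eq fun x x' => le_antisymm ?_ ?_
  · refine (BoundedContinuousFunction.dist_le dist_nonneg).2 fun y => ?_
    simpa [kuratowskiBounded_apply, Real.dist_eq] using abs_dist_sub_le x x' y
  · simpa [kuratowskiBounded_apply, Real.dist_eq] using
      BoundedContinuousFunction.dist_coe_le_dist (f := kuratowskiBounded x₀ x)
        (g := kuratowskiBounded x₀ x') x'

/-- Wojdysławski's estimate: evaluating at `x` bounds `dist (kuratowskiBounded x₀ x) z` below by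
`z x + dist x₀ x`, which is `∑ wᵢ * dist qᵢ x` when `z = ∑ wᵢ • kuratowskiBounded x₀ qᵢ`. -/
theorem exists_forall_mul_dist_le_of_mem_convexHull (x₀ : K) {z : K →ᵇ ℝ}
    (hz : z ∈ convexHull ℝ (range (kuratowskiBounded x₀))) :
    ∃ q : K, ∃ c > 0, ∀ x, c * dist q x ≤ dist (kuratowskiBounded x₀ x) z := by
  let S : Set (K →ᵇ ℝ) := {z | (∀ x, 0 ≤ z x + dist x₀ x) ∧
    ∃ q : K, ∃ c > 0, ∀ x, c * dist q x ≤ z x + dist x₀ x}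
  have hS : Convex ℝ S := by
    rintro z₁ ⟨hz₁, q₁, c₁, hc₁, hq₁⟩ z₂ ⟨hz₂, q₂, c₂, hc₂, hq₂⟩ a b ha hb hab
    have hcomb : ∀ x, (a • z₁ + b • z₂) x + dist x₀ x =
        a * (z₁ x + dist x₀ x) + b * (z₂ x + dist x₀ x) := fun x => by
      simp only [BoundedContinuousFunction.coe_add, BoundedContinuousFunction.coe_smul,
        Pi.add_apply, smul_eq_mul]
      linear_combination -dist x₀ x * hab
    refine ⟨fun x => by rw [hcomb]; have := hz₁ x; have := hz₂ x; positivity, ?_⟩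
    rcases ha.eq_or_lt with rfl | ha
    · refine ⟨q₂, b * c₂, by simp_all, fun x => ?_⟩
      rw [hcomb, mul_assoc]
      nlinarith [hq₂ x, hz₁ x]
    · refine ⟨q₁, a * c₁, by positivity, fun x => ?_⟩
      rw [hcomb, mul_assoc]
      nlinarith [hq₁ x, hz₂ x]
  have hrange : range (kuratowskiBounded x₀) ⊆ S := by
    rintro _ ⟨q, rfl⟩
    refine ⟨fun x => by simp [kuratowskiBounded_apply], q, 1, one_pos, fun x => ?_⟩
    simp [kuratowskiBounded_apply]
  obtain ⟨-, q, c, hc, hq⟩ := convexHull_min hrange hS hz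
  refine ⟨q, c, hc, fun x => (hq x).trans ?_⟩
  have := BoundedContinuousFunction.dist_coe_le_dist (f := kuratowskiBounded x₀ x) (g := z) x
  rw [Real.dist_eq, kuratowskiBounded_apply, dist_self, zero_sub] at this
  linarith [neg_abs_le (-dist x₀ x - z x)]

theorem closure_inter_convexHull_range_kuratowskiBounded_subset (x₀ : K) :
    closure (range (kuratowskiBounded x₀)) ∩ convexHull ℝ (range (kuratowskiBounded x₀)) ⊆
      range (kuratowskiBounded x₀) := by
  rintro z ⟨hzcl, hz⟩
  obtain ⟨q, c, hc, hq⟩ := exists_forall_mul_dist_le_of_mem_convexHull x₀ hz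
  refine ⟨q, eq_of_forall_dist_le fun δ hδ => ?_⟩
  obtain ⟨x, hx⟩ := mem_closure_range_iff.1 hzcl (δ / (1 + c⁻¹)) (by positivity)
  rw [dist_comm] at hx
  calc dist (kuratowskiBounded x₀ q) z
      ≤ dist q x + dist (kuratowskiBounded x₀ x) z := by
        rw [← (isometry_kuratowskiBounded x₀).dist_eq]; exact dist_triangle _ _ _
    _ ≤ c⁻¹ * dist (kuratowskiBounded x₀ x) z + dist (kuratowskiBounded x₀ x) z := by
        gcongr; rw [le_inv_mul_iff₀ hc]; exact hq x
    _ = (1 + c⁻¹) * dist (kuratowskiBounded x₀ x) z := by ring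
    _ ≤ δ := by rw [← le_div_iff₀' (by positivity)]; exact hx.le

end Kuratowski

theorem isClosedEmbedding_codRestrict_kuratowskiBounded {K : Type*} [MetricSpace K] (x₀ : K) :
    IsClosedEmbedding (codRestrict (kuratowskiBounded x₀)
      (convexHull ℝ (range (kuratowskiBounded x₀))) fun x => subset_convexHull ℝ _ ⟨x, rfl⟩) := by
  refine ⟨(isometry_kuratowskiBounded x₀).isEmbedding.codRestrict _ _, ?_⟩
  rw [range_codRestrict]
  convert isClosed_closure.preimage continuous_subtype_val using 1
  exact Subset.antisymm (preimage_mono subset_closure) fun z hz =>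
    closure_inter_convexHull_range_kuratowskiBounded_subset x₀ ⟨hz, z.2⟩

theorem PartitionOfUnity.exists_ne_zero_forall_le {ι X β : Type*} [TopologicalSpace X]
    [LinearOrder β] {s : Set X} (φ : PartitionOfUnity ι X s) {x : X} (hx : x ∈ s) (ρ : ι → β) :
    ∃ j, φ j x ≠ 0 ∧ ∀ i, φ i x ≠ 0 → ρ i ≤ ρ j :=
  exists_max_image _ ρ (φ.locallyFinite.point_finite x)
    (Function.support_nonempty_iff.2 fun h0 => by
      simpa [show ∀ i, φ i x = 0 from congrFun h0] using φ.sum_eq_one hx)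

theorem exists_isOpen_superset_continuousMap_mem_ball {X E : Type*} [PseudoMetricSpace X]
    [SeminormedAddCommGroup E] [NormedSpace ℝ E] (A : Set X) (h : C(A, E)) (δ : A → ℝ)
    (hδ : ∀ a, 0 < δ a) :
    ∃ (U : Set X) (_ : IsOpen U) (_ : A ⊆ U) (F : C(U, E)),
      (∀ x, F x ∈ convexHull ℝ (range h)) ∧
      ∀ x : U, ∃ a : A, F x ∈ ball (h a) (δ a) ∧ ∀ b : A, (b : X) = x → h b ∈ ball (h a) (δ a) := by
  choose ρ hρ hρh using fun a => continuousAt_iff.1 h.continuous.continuousAt (δ a) (hδ a)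
  let U : Set X := ⋃ a : A, ball (a : X) (ρ a / 2)
  refine ⟨U, isOpen_iUnion fun _ => isOpen_ball,
    fun x hx => mem_iUnion.2 ⟨⟨x, hx⟩, mem_ball_self (half_pos (hρ _))⟩, ?_⟩
  obtain ⟨φ, hφ⟩ := PartitionOfUnity.exists_isSubordinate (X := U) isClosed_univ
    (fun a : A => Subtype.val ⁻¹' ball (a : X) (ρ a / 2))
    (fun _ => isOpen_ball.preimage continuous_subtype_val) fun x _ => by
      simpa only [U, mem_iUnion, mem_preimage] using x.2
  have hφρ : ∀ (a : A) x, φ a x ≠ 0 → dist (x : X) a < ρ a / 2 := fun a x hx =>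
    hφ a (subset_closure hx)
  refine ⟨⟨fun x => ∑ᶠ a, φ a x • h a, φ.continuous_finsum_smul fun _ _ _ => continuousAt_const⟩,
    fun x => φ.finsum_smul_mem_convex (g := fun a _ => h a) (mem_univ x)
      (fun a _ => subset_convexHull ℝ _ (mem_range_self a)) (convex_convexHull ℝ _), fun x => ?_⟩
  -- among the indices active at `x`, the one with the largest `ρ` is close to all the others
  obtain ⟨j, hj, hjmax⟩ := φ.exists_ne_zero_forall_le (mem_univ x) ρ
  have hnear : ∀ b : A, dist (b : X) x < ρ j / 2 → h b ∈ ball (h j) (δ j) := fun b hb =>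
    hρh j <| calc dist (b : X) j ≤ dist (b : X) x + dist (x : X) j := dist_triangle _ _ _
      _ < ρ j / 2 + ρ j / 2 := add_lt_add hb (hφρ j x hj)
      _ = ρ j := add_halves _
  refine ⟨j, φ.finsum_smul_mem_convex (g := fun a _ => h a) (mem_univ x)
    (fun i hi => hnear i ?_) (convex_ball _ _), ?_⟩
  · rw [dist_comm]
    exact (hφρ i x hi).trans_le (by linarith [hjmax i hi])
  · intro b hb
    exact hnear b (by simpa [hb] using half_pos (hρ j))

theorem Topology.IsEmbedding.homotopic_of_forall_homotopy_mem_range {Y T Z : Type*}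
    [TopologicalSpace Y] [TopologicalSpace T] [TopologicalSpace Z] {ι : C(T, Z)}
    (hι : IsEmbedding ι) {f₀ f₁ : C(Y, T)} (H : (ι.comp f₀).Homotopy (ι.comp f₁))
    (hH : ∀ p, H p ∈ range ι) : f₀.Homotopic f₁ :=
  ⟨{ toFun := fun p => (hH p).choose
     continuous_toFun := hι.continuous_iff.2 <| by
       simpa only [Function.comp_def, (hH _).choose_spec] using H.continuous
     map_zero_left := fun y => hι.injective <| (hH _).choose_spec.trans (H.apply_zero y)
     map_one_left := fun y => hι.injective <| (hH _).choose_spec.trans (H.apply_one y) }⟩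

theorem exists_pos_forall_dist_lt_retraction_dist_lt {K Z : Type*} [PseudoMetricSpace K]
    [PseudoMetricSpace Z] {e : K → Z} {V : Set Z} (hV : IsOpen V) (heV : ∀ x, e x ∈ V)
    (r : C(V, K)) (hr : ∀ x, r ⟨e x, heV x⟩ = x) (p : K) {ε : ℝ} (hε : 0 < ε) :
    ∃ η > 0, ∀ z, dist z (e p) < η → ∃ hz : z ∈ V, dist (r ⟨z, hz⟩) p < ε := by
  have hW : IsOpen (Subtype.val '' (r ⁻¹' ball p ε)) :=
    hV.isOpenMap_subtype_val _ (isOpen_ball.preimage r.continuous)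
  obtain ⟨η, hη, hball⟩ := isOpen_iff.1 hW (e p) ⟨⟨e p, heV p⟩, by simpa [hr] using hε, rfl⟩
  refine ⟨η, hη, fun z hz => ?_⟩
  obtain ⟨z, hzr, rfl⟩ := hball hz
  exact ⟨z.2, hzr⟩

theorem exists_isOpen_superset_homotopic_of_retract {X K E : Type*} [PseudoMetricSpace X]
    [PseudoMetricSpace K] [SeminormedAddCommGroup E] [NormedSpace ℝ E] {C : Set E}
    (hC : Convex ℝ C) {e : K → C} (he : Continuous e) {V : Set C} (hV : IsOpen V)
    (heV : ∀ x, e x ∈ V) (r : C(V, K)) (hr : ∀ x, r ⟨e x, heV x⟩ = x) (A : Set X) (f : C(A, K))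
    {ε : ℝ} (hε : 0 < ε) :
    ∃ (U : Set X) (_ : IsOpen U) (hAU : A ⊆ U) (g : C(U, K)),
      (∀ u : U, g u ∈ thickening ε (range f)) ∧
      (g.comp ⟨inclusion hAU, continuous_inclusion hAU⟩).Homotopic f := by
  choose η hη hηr using fun p => exists_pos_forall_dist_lt_retraction_dist_lt hV heV r hr p hε
  let h : C(A, E) := ⟨fun a => e (f a), by fun_prop⟩
  obtain ⟨U, hU, hAU, F, hFhull, hF⟩ :=
    exists_isOpen_superset_continuousMap_mem_ball A h (fun a => η (f a)) fun a => hη _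
  choose a haF haA using hF
  have hFC : ∀ x, F x ∈ C := fun x =>
    (hC.convexHull_subset_iff.2 (range_subset_iff.2 fun b => (e (f b)).2)) (hFhull x)
  have hballV : ∀ (z : C) (x : U), (z : E) ∈ ball (h (a x)) (η (f (a x))) →
      ∃ hz : z ∈ V, dist (r ⟨z, hz⟩) (f (a x)) < ε := fun z x hz => hηr _ z hz
  let F₀ : C(U, V) := ⟨fun x => ⟨⟨F x, hFC x⟩, (hballV _ x (haF x)).1⟩, by fun_prop⟩
  refine ⟨U, hU, hAU, r.comp F₀,
    fun x => mem_thickening_iff.2 ⟨f (a x), mem_range_self _, (hballV _ x (haF x)).2⟩, ?_⟩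
  let ι : C(V, E) := ⟨fun z => z.1.1, by fun_prop⟩
  have hι : IsEmbedding ι := IsEmbedding.subtypeVal.comp IsEmbedding.subtypeVal
  let F₁ : C(A, V) := ⟨fun b => ⟨e (f b), heV _⟩, by fun_prop⟩
  have hF₀₁ : (F₀.comp ⟨inclusion hAU, continuous_inclusion hAU⟩).Homotopic F₁ := by
    refine hι.homotopic_of_forall_homotopy_mem_range (.affine _ _) fun ⟨t, b⟩ => ?_
    let x := inclusion hAU b
    have hseg := lineMap_mem_segment ℝ (F x) (e (f b) : E) t.2
    have hzC := hC.segment_subset (hFC x) (e (f b)).2 hseg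
    have hzV := hballV ⟨_, hzC⟩ x ((convex_ball _ _).segment_subset (haF x) (haA x b rfl) hseg)
    exact ⟨⟨⟨_, hzC⟩, hzV.1⟩, rfl⟩
  have hrF₁ : r.comp F₁ = f := ContinuousMap.ext fun b => hr (f b)
  exact hrF₁ ▸ (ContinuousMap.Homotopic.refl r).comp hF₀₁

theorem walsh_lemma_general {X : Type v} [MetricSpace X] (A : Set X)
    (K : Type u) [MetricSpace K] (hK : IsANR K)
    (f : C(A, K)) (ε : ℝ) (hε : 0 < ε) :
    ∃ (U : Set X) (_ : IsOpen U) (hAU : A ⊆ U) (g : C(U, K)),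
      (∀ u : U, g u ∈ Metric.thickening ε (Set.range f)) ∧
      (g.comp ⟨Set.inclusion hAU, continuous_inclusion hAU⟩).Homotopic f := by
  rcases isEmpty_or_nonempty K with _ | ⟨⟨x₀⟩⟩
  · obtain rfl : A = ∅ := eq_empty_of_forall_notMem fun a ha => isEmptyElim (f ⟨a, ha⟩)
    exact ⟨∅, isOpen_empty, subset_rfl, ⟨fun u => u.2.elim, continuous_of_discreteTopology⟩,
      fun u => u.2.elim, Subsingleton.elim _ f ▸ .refl _⟩
  · have he := isClosedEmbedding_codRestrict_kuratowskiBounded x₀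
    obtain ⟨V, hV, heV, r, hr⟩ := hK.2 _ _ he
    exact exists_isOpen_superset_homotopic_of_retract (convex_convexHull ℝ _) he.continuous hV heV
      r hr A f hε

/-- **Walsh Lemma.** Let `X` be a separable metric space, `A ⊆ X`, `K` a
separable metric ANR and `f : A → K` continuous. Then for every `ε > 0` there are an
open set `U ⊇ A` and a continuous `g : U → K` with `g(U)` contained in the
`ε`-neighborhood of `f(A)`, and `g|_A` homotopic to `f`. -/
theorem walsh_lemma {X : Type v} [MetricSpace X] [SeparableSpace X] (A : Set X)
    (K : Type u) [MetricSpace K] [SeparableSpace K] (hK : IsANR K)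
    (f : C(A, K)) (ε : ℝ) (hε : 0 < ε) :
    ∃ (U : Set X) (_ : IsOpen U) (hAU : A ⊆ U) (g : C(U, K)),
      (∀ u : U, g u ∈ Metric.thickening ε (Set.range f)) ∧
      (g.comp ⟨Set.inclusion hAU, continuous_inclusion hAU⟩).Homotopic f :=
  walsh_lemma_general A K hK f ε hε
end

section
/- Let K be a metrizable ANE and y₀ ∈ K. Then the path space PK = {φ : [0,1] → K continuous | φ(1) = y₀}, with the compact-open (sup metric) topology, is also an ANE: for every metric space X, every closed subset A ⊆ X, and every continuous map f : A → PK, the map f extends continuously over some open neighborhood U of A in X. -/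
open Set Metric TopologicalSpace

/-- A metrizable space `K` is an ANE (absolute neighborhood extensor) for metrizable
spaces if every continuous map to `K` from a closed subset of a metrizable space
extends continuously over some open neighborhood of that subset. -/
def IsANE (K : Type u) [TopologicalSpace K] : Prop :=
  MetrizableSpace K ∧
    ∀ (Z : Type u) [MetricSpace Z] (Y : Set Z), IsClosed Y →
      ∀ h : C(Y, K), ∃ (U : Set Z) (_ : IsOpen U) (hYU : Y ⊆ U) (H : C(U, K)),
        ∀ (z : Z) (hz : z ∈ Y), H ⟨z, hYU hz⟩ = h ⟨z, hz⟩

/-- The path space `PK` of paths in `K` ending at `y₀`, with the compact-open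
topology inherited from `C([0,1], K)`. -/
abbrev PathSpace (K : Type*) [TopologicalSpace K] (y₀ : K) :=
  {φ : C(unitInterval, K) // φ 1 = y₀}

/-!
A map `f : A → PK` is the same as a map `(x, t) ↦ f x t` on `A × I`, and together with the
constant `y₀` on `X × {1}` it is a continuous map on the closed set `A × I ∪ X × {1}` of the
metric space `X × I`. Since `K` is an ANE, it extends over an open neighbourhood `W`; as `I` is
compact, `W` contains a tube `U × I` around `A`, and currying the extension on `U × I` gives
the required extension `U → PK`, whose paths still end at `y₀`.
-/

open unitInterval

lemma isOpen_setOf_forall_prodMk_mem {X Y : Type*} [TopologicalSpace X] [TopologicalSpace Y]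
    [CompactSpace Y] {W : Set (X × Y)} (hW : IsOpen W) : IsOpen {x | ∀ y, (x, y) ∈ W} := by
  have hcompl : {x | ∀ y, (x, y) ∈ W} = (Prod.fst '' Wᶜ)ᶜ := by
    ext x
    simp
  rw [hcompl]
  exact (isClosedMap_fst_of_compactSpace _ hW.isClosed_compl).isOpen_compl

namespace ContinuousMap

variable {X Y Z : Type*} [TopologicalSpace X] [TopologicalSpace Y] [TopologicalSpace Z]

def curryOn {W : Set (X × Y)} (H : C(W, Z)) (U : Set X) (hU : ∀ x ∈ U, ∀ y, (x, y) ∈ W) :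
    C(U, C(Y, Z)) :=
  (H.comp ⟨fun p => ⟨(p.1.1, p.2), hU _ p.1.2 _⟩, by fun_prop⟩).curry

end ContinuousMap

namespace PathSpace

variable {K : Type*} [TopologicalSpace K] {y₀ : K} {X : Type*} [TopologicalSpace X] {A : Set X}

open Classical in
noncomputable def uncurryOn (f : C(A, PathSpace K y₀)) (z : X × I) : K :=
  if hx : z.1 ∈ A then (f ⟨z.1, hx⟩).1 z.2 else y₀

lemma uncurryOn_of_mem (f : C(A, PathSpace K y₀)) {x : X} (hx : x ∈ A) (t : I) :
    uncurryOn f (x, t) = (f ⟨x, hx⟩).1 t :=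
  dif_pos hx

lemma uncurryOn_one (f : C(A, PathSpace K y₀)) (x : X) : uncurryOn f (x, 1) = y₀ := by
  by_cases hx : x ∈ A
  · rw [uncurryOn_of_mem f hx, (f ⟨x, hx⟩).2]
  · exact dif_neg hx

lemma continuousOn_uncurryOn (f : C(A, PathSpace K y₀)) (hA : IsClosed A) :
    ContinuousOn (uncurryOn f) (A ×ˢ univ ∪ univ ×ˢ {1}) := by
  refine ContinuousOn.union_of_isClosed ?_ ?_ (hA.prod isClosed_univ)
    (isClosed_univ.prod isClosed_singleton)
  · rw [continuousOn_iff_continuous_domRestrict]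
    have hrestrict : (A ×ˢ univ).domRestrict (uncurryOn f)
        = fun z => (f ⟨z.1.1, z.2.1⟩).1 z.1.2 :=
      funext fun z => uncurryOn_of_mem f z.2.1 z.1.2
    rw [hrestrict]
    fun_prop
  · refine (continuousOn_const (c := y₀)).congr fun z hz => ?_
    rw [show z = (z.1, 1) from Prod.ext rfl hz.2, uncurryOn_one]

end PathSpace

open PathSpace in
theorem pathSpace_isANE_general (K : Type u) [TopologicalSpace K]
    (hK : IsANE K) (y₀ : K)
    (X : Type u) [MetricSpace X] (A : Set X) (hA : IsClosed A)
    (f : C(A, PathSpace K y₀)) :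
    ∃ (U : Set X) (_ : IsOpen U) (hAU : A ⊆ U) (F : C(U, PathSpace K y₀)),
      ∀ (x : X) (hx : x ∈ A), F ⟨x, hAU hx⟩ = f ⟨x, hx⟩ := by
  set Y : Set (X × I) := A ×ˢ univ ∪ univ ×ˢ {1}
  have hY : IsClosed Y := (hA.prod isClosed_univ).union (isClosed_univ.prod isClosed_singleton)
  obtain ⟨W, hW, hYW, H, hH⟩ := hK.2 (X × I) Y hY ⟨_, (continuousOn_uncurryOn f hA).domRestrict⟩
  set U : Set X := {x | ∀ t, (x, t) ∈ W}
  have hAU : A ⊆ U := fun x hx t => hYW (Or.inl ⟨hx, trivial⟩)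
  let F : C(U, C(I, K)) := ContinuousMap.curryOn H U fun _ hx => hx
  have hF_one : ∀ x, F x 1 = y₀ := fun x =>
    (hH (x, 1) (Or.inr ⟨trivial, rfl⟩)).trans (uncurryOn_one f x)
  refine ⟨U, isOpen_setOf_forall_prodMk_mem hW, hAU,
    ⟨fun x => ⟨F x, hF_one x⟩, by fun_prop⟩, fun x hx => ?_⟩
  ext t
  exact (hH (x, t) (Or.inl ⟨hx, trivial⟩)).trans (uncurryOn_of_mem f hx t)

/-- If `K` is a metrizable ANE and `y₀ ∈ K`, then the path space `PK`
is also an ANE: every continuous map from a closed subset `A` of a metric space `X`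
into `PK` extends continuously over some open neighborhood `U` of `A` in `X`. -/
theorem pathSpace_isANE (K : Type u) [TopologicalSpace K] [MetrizableSpace K]
    (hK : IsANE K) (y₀ : K)
    (X : Type u) [MetricSpace X] (A : Set X) (hA : IsClosed A)
    (f : C(A, PathSpace K y₀)) :
    ∃ (U : Set X) (_ : IsOpen U) (hAU : A ⊆ U) (F : C(U, PathSpace K y₀)),
      ∀ (x : X) (hx : x ∈ A), F ⟨x, hAU hx⟩ = f ⟨x, hx⟩ :=
  pathSpace_isANE_general K hK y₀ X A hA f
end

section
/- Let X be a compact metric ANR and let A ⊆ X be a subset that is contractible in X. Then there exists an open set U ⊆ X with A ⊆ U such that U is contractible in X. -/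
open Set Metric TopologicalSpace

/-- The inclusion of a subset of `X` into `X`, as a continuous map. -/
def ContinuousMap.setInclusion {X : Type*} [TopologicalSpace X] (A : Set X) : C(A, X) :=
  ⟨Subtype.val, continuous_subtype_val⟩

/-- A subset `A ⊆ X` is *contractible in `X`* if the inclusion map `A → X`
is homotopic to a constant map. -/
def ContractibleIn {X : Type*} [TopologicalSpace X] (A : Set X) : Prop :=
  (ContinuousMap.setInclusion A).Nullhomotopic

/-! The contraction of `A` is a continuous family of paths `A → C(I, X)`. Embed `X` isometrically
in a normed space `E`; being an ANR, `X` is then a retract of some thickening of itself. Locally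
constant convex choices, glued by a partition of unity, extend the family of paths to an open
`V ⊇ A`, up to a small error and still ending at the same point `c`. Each `x ∈ V` is joined by a
segment to the start of its path; retracting this segment followed by the path contracts `V`. -/

theorem Continuous.exists_radii_forall_dist_lt {X Y : Type*} [PseudoMetricSpace X]
    [PseudoMetricSpace Y] {A : Set X} {g : A → Y} (hg : Continuous g) {ε : ℝ} (hε : 0 < ε) :
    ∃ ρ : A → ℝ, (∀ a, 0 < ρ a ∧ ρ a ≤ ε) ∧
      ∀ (x : X) (a b : A), dist x a < ρ a → dist x b < ρ b → dist (g a) (g b) < ε := by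
  choose η hη_pos hη using fun a : A => Metric.continuous_iff.1 hg a ε hε
  refine ⟨fun a => min (η a / 2) ε, fun a => ⟨lt_min (half_pos (hη_pos a)) hε, min_le_right _ _⟩,
    fun x a b ha hb => ?_⟩
  wlog hab : min (η a / 2) ε ≤ min (η b / 2) ε generalizing a b
  · exact dist_comm (g a) (g b) ▸ this b a hb ha (le_of_not_ge hab)
  refine hη b a (?_ : dist (a : X) b < η b)
  calc dist (a : X) b ≤ dist (a : X) x + dist x b := dist_triangle _ _ _
    _ < min (η b / 2) ε + min (η b / 2) ε := by rw [dist_comm]; linarith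
    _ ≤ η b := by linarith [min_le_left (η b / 2) ε]

theorem exists_isOpen_superset_approx_extension {X F : Type*} [MetricSpace X]
    [NormedAddCommGroup F] [NormedSpace ℝ F] {A : Set X} (g : C(A, F)) {ε : ℝ} (hε : 0 < ε) :
    ∃ V : Set X, IsOpen V ∧ A ⊆ V ∧ ∃ G : C(V, F), ∀ x : V,
      G x ∈ convexHull ℝ (range g) ∧ ∃ a : A, dist (x : X) a < ε ∧ dist (G x) (g a) ≤ ε := by
  obtain ⟨ρ, hρ, hρg⟩ := g.continuous.exists_radii_forall_dist_lt hε
  let V := ⋃ a : A, ball (a : X) (ρ a)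
  let t : V → Set F := fun x =>
    convexHull ℝ (range g) ∩ ⋂ (a : A) (_ : dist (x : X) a < ρ a), closedBall (g a) ε
  have ht : ∀ x, Convex ℝ (t x) := fun x =>
    (convex_convexHull ℝ _).inter (convex_iInter₂ fun _ _ => convex_closedBall _ _)
  have hloc : ∀ x : V, ∃ p : F, ∀ᶠ y in nhds x, p ∈ t y := by
    intro x
    obtain ⟨a, hxa⟩ := mem_iUnion.1 x.2
    have hnhds : Subtype.val ⁻¹' ball (a : X) (ρ a) ∈ nhds x :=
      (isOpen_ball.preimage continuous_subtype_val).mem_nhds hxa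
    refine ⟨g a, Filter.mem_of_superset hnhds fun y hya => ⟨subset_convexHull ℝ _ ⟨a, rfl⟩, ?_⟩⟩
    exact mem_iInter₂.2 fun b hyb => mem_closedBall.2 (hρg y a b hya hyb).le
  obtain ⟨G, hG⟩ := exists_continuous_forall_mem_convex_of_local_const ht hloc
  refine ⟨V, isOpen_iUnion fun _ => isOpen_ball,
    fun x hx => mem_iUnion.2 ⟨⟨x, hx⟩, mem_ball_self (hρ _).1⟩, G, fun x => ⟨(hG x).1, ?_⟩⟩
  obtain ⟨a, hxa⟩ := mem_iUnion.1 x.2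
  exact ⟨a, hxa.trans_le (hρ a).2, mem_closedBall.1 (mem_iInter₂.1 (hG x).2 a hxa)⟩

theorem ContinuousMap.apply_eq_of_mem_convexHull {α M : Type*} [TopologicalSpace α]
    [AddCommGroup M] [TopologicalSpace M] [Module ℝ M] [ContinuousAdd M] [ContinuousConstSMul ℝ M]
    {s : Set C(α, M)} {t : α} {v : M} (hs : ∀ p ∈ s, p t = v) {p : C(α, M)}
    (hp : p ∈ convexHull ℝ s) : p t = v :=
  convexHull_min hs ((convex_singleton v).linear_preimage (evalCLM ℝ t).toLinearMap) hp

theorem IsANR.exists_isometry_retraction {X : Type u} [MetricSpace X] [CompactSpace X]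
    [Nonempty X] (hX : IsANR X) :
    ∃ (E : Type u) (_ : NormedAddCommGroup E) (_ : NormedSpace ℝ E) (κ : X → E) (r : E → X)
      (δ : ℝ), Isometry κ ∧ Function.LeftInverse r κ ∧ 0 < δ ∧
        ContinuousOn r (thickening δ (range κ)) := by
  classical
  let κ : X → ULift.{u} (lp (fun _ : ℕ => ℝ) ⊤) := fun x => ULift.up (kuratowskiEmbedding X x)
  have hκ : Isometry κ := fun x y => kuratowskiEmbedding.isometry X x y
  obtain ⟨U, hUo, hκU, r, hr⟩ := hX.2 _ κ hκ.isClosedEmbedding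
  obtain ⟨δ, hδ, hδU⟩ := (isCompact_range hκ.continuous).exists_thickening_subset_open hUo
    (range_subset_iff.2 hκU)
  let r' : ULift.{u} (lp (fun _ : ℕ => ℝ) ⊤) → X := fun p =>
    if h : p ∈ U then r ⟨p, h⟩ else Classical.arbitrary X
  have hr'U : ContinuousOn r' U := by
    rw [continuousOn_iff_continuous_domRestrict]
    convert r.continuous using 1
    funext p
    exact dif_pos p.2
  exact ⟨_, inferInstance, inferInstance, κ, r', δ, hκ, fun x => by simp [r', hκU, hr], hδ,
    hr'U.mono hδU⟩

theorem ContinuousMap.homotopic_of_continuousOn_comp {Y E X : Type*} [TopologicalSpace Y]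
    [TopologicalSpace E] [TopologicalSpace X] {r : E → X} {T : Set E} (hr : ContinuousOn r T)
    {H : unitInterval × Y → E} (hH : Continuous H) (hHT : ∀ z, H z ∈ T) {f₀ f₁ : C(Y, X)}
    (h₀ : ∀ y, r (H (0, y)) = f₀ y) (h₁ : ∀ y, r (H (1, y)) = f₁ y) : f₀.Homotopic f₁ :=
  ⟨{ toFun := r ∘ H
     continuous_toFun := hr.comp_continuous hH hHT
     map_zero_left := h₀
     map_one_left := h₁ }⟩

theorem ContinuousMap.nullhomotopic_of_segment_trans_paths {Y E X : Type*} [TopologicalSpace Y]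
    [AddCommGroup E] [TopologicalSpace E] [IsTopologicalAddGroup E] [Module ℝ E]
    [ContinuousSMul ℝ E] [TopologicalSpace X] {κ : X → E} {r : E → X} {T : Set E}
    (hκ : Continuous κ) (hrκ : Function.LeftInverse r κ) (hr : ContinuousOn r T) (f : C(Y, X))
    (G : C(Y, C(unitInterval, E))) (hseg : ∀ y, segment ℝ (κ (f y)) (G y 0) ⊆ T)
    (hG : ∀ y s, G y s ∈ T) {c : X} (hc : ∀ y, G y 1 = κ c) : f.Nullhomotopic := by
  let f' : C(Y, X) := ⟨fun y => r (G y 0), hr.comp_continuous (by fun_prop) fun y => hG y 0⟩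
  refine ⟨c, ContinuousMap.Homotopic.trans (g := f') ?_ ?_⟩
  · let segments := Homotopy.affine (.comp ⟨κ, hκ⟩ f) ⟨fun y => G y 0, by fun_prop⟩
    refine homotopic_of_continuousOn_comp hr segments.continuous
      (fun p => hseg p.2 (lineMap_mem_segment ℝ _ _ p.1.2)) (fun y => ?_) (fun y => ?_)
    · rw [segments.apply_zero]
      exact hrκ (f y)
    · rw [segments.apply_one]
      rfl
  · exact homotopic_of_continuousOn_comp hr (H := fun p => G p.2 p.1) (by fun_prop)
      (fun p => hG p.2 p.1) (fun _ => rfl) (fun y => by simp [hc, hrκ c])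

/-- Let `X` be a compact metric ANR and `A ⊆ X` contractible in `X`.
Then some open set `U ⊇ A` is contractible in `X`. -/
theorem exists_open_contractible_superset (X : Type u) [MetricSpace X] [CompactSpace X]
    (hX : IsANR X) (A : Set X) (hA : ContractibleIn A) :
    ∃ U : Set X, IsOpen U ∧ A ⊆ U ∧ ContractibleIn U := by
  obtain ⟨c, ⟨H⟩⟩ := hA
  have : Nonempty X := ⟨c⟩
  obtain ⟨E, _, _, κ, r, δ, hκ, hrκ, hδ, hr⟩ := hX.exists_isometry_retraction
  let paths : C(A, C(unitInterval, E)) :=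
    (ContinuousMap.comp ⟨κ, hκ.continuous⟩ (H.toContinuousMap.comp .prodSwap)).curry
  obtain ⟨V, hVo, hAV, G, hG⟩ := exists_isOpen_superset_approx_extension paths (half_pos hδ)
  refine ⟨V, hVo, hAV, ContinuousMap.nullhomotopic_of_segment_trans_paths hκ.continuous hrκ hr
    (ContinuousMap.setInclusion V) G (c := c) (fun x => ?_) (fun x s => ?_) (fun x => ?_)⟩
  · obtain ⟨a, hxa, ha⟩ := (hG x).2
    have h0 : dist (G x 0) (κ x) < δ :=
      calc dist (G x 0) (κ x) ≤ dist (G x 0) (paths a 0) + dist (κ a) (κ x) :=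
            congrArg κ (H.apply_zero a) ▸ dist_triangle _ _ _
        _ < δ / 2 + δ / 2 := by
            rw [hκ.dist_eq, dist_comm (a : X)]
            exact add_lt_add_of_le_of_lt ((ContinuousMap.dist_apply_le_dist 0).trans ha) hxa
        _ = δ := add_halves δ
    exact ((convex_ball _ _).segment_subset (mem_ball_self hδ) h0).trans
      (ball_subset_thickening (mem_range_self _) δ)
  · obtain ⟨a, -, ha⟩ := (hG x).2
    refine mem_thickening_iff.2 ⟨paths a s, ⟨_, rfl⟩, ?_⟩
    exact (ContinuousMap.dist_apply_le_dist s).trans_lt (ha.trans_lt (half_lt_self hδ))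
  · exact ContinuousMap.apply_eq_of_mem_convexHull
      (range_subset_iff.2 fun a => congrArg κ (H.apply_one a)) (hG x).1
end

section
/- For a compact metric ANR X, the general LS-category equals the Lusternik–Schnirelmann category: cat_g X = cat X. -/
/-!
A set contractible in `X` has an open neighbourhood contractible in `X`, so covers by
contractible sets can be replaced by open ones. To find the neighbourhood, embed `X`
isometrically into the Banach space `X →ᵇ ℝ` by `x ↦ dist x ·`; as `X` is a compact ANR, some
`δ`-thickening of the image retracts onto `X`. A contraction `F` of `A` is a continuous family
`a ↦ F(·, a)` of paths. Averaging these paths over a partition of unity extends the family to a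
neighbourhood `U` of `A`, each new path being a convex combination of paths `δ/2`-close to one of
them, so it stays in the thickening and still ends at the base point. Following the segment from
`x` to the start of its averaged path and then that path, and retracting, contracts `U` in `X`.
-/

open Set Metric TopologicalSpace

/-- The general Lusternik–Schnirelmann category `cat_g X`: the smallest `k` such that
`X` is the union of `k+1` arbitrary subsets, each contractible in `X` (`⊤` if no such
`k` exists). -/
noncomputable def catg (X : Type*) [TopologicalSpace X] : ℕ∞ :=
  sInf {N : ℕ∞ | ∃ k : ℕ, N = k ∧ ∃ A : Fin (k + 1) → Set X,
    (⋃ i, A i) = Set.univ ∧ ∀ i, ContractibleIn (A i)}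

/-- The (classical) Lusternik–Schnirelmann category `cat X`: the smallest `k` such that
`X` is the union of `k+1` *open* subsets, each contractible in `X`. -/
noncomputable def lsCat (X : Type*) [TopologicalSpace X] : ℕ∞ :=
  sInf {N : ℕ∞ | ∃ k : ℕ, N = k ∧ ∃ A : Fin (k + 1) → Set X,
    (∀ i, IsOpen (A i)) ∧ (⋃ i, A i) = Set.univ ∧ ∀ i, ContractibleIn (A i)}

universe u

open scoped unitInterval BoundedContinuousFunction

theorem exists_approx_extension_mem_convexHull {X E : Type*} [MetricSpace X]
    [SeminormedAddCommGroup E] [NormedSpace ℝ E] {A : Set X} (Φ : C(A, E)) {ε : ℝ} (hε : 0 < ε) :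
    ∃ U : Set X, IsOpen U ∧ A ⊆ U ∧ ∃ g : C(U, E), ∀ x : U,
      g x ∈ convexHull ℝ (range Φ) ∧ ∃ a : A, dist (x : X) a < ε ∧ dist (g x) (Φ a) ≤ ε := by
  have hρ : ∀ a : A, ∃ ρ, 0 < ρ ∧ ρ ≤ ε ∧ ∀ b : A, dist b a < ρ → dist (Φ b) (Φ a) ≤ ε := by
    intro a
    obtain ⟨ρ, hρ, hΦ⟩ := Metric.continuous_iff.1 Φ.continuous a ε hε
    exact ⟨min ρ ε, lt_min hρ hε, min_le_right _ _,
      fun b hb => (hΦ b (hb.trans_le (min_le_left _ _))).le⟩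
  choose ρ hρ_pos hρ_le hρ using hρ
  -- Of two centres whose half-radius balls share the point `x`, the one with the smaller radius
  -- lies in the full-radius ball of the other.
  have hnear : ∀ (x : X) (a b : A), dist x a < ρ a / 2 → dist x b < ρ b / 2 →
      dist (Φ a) (Φ b) ≤ ε := by
    intro x a b ha hb
    have hab : dist (a : X) b < ρ a / 2 + ρ b / 2 :=
      (dist_triangle_left _ _ x).trans_lt (add_lt_add ha hb)
    rcases le_total (ρ a) (ρ b) with h | h
    · exact hρ b a (by rw [Subtype.dist_eq]; linarith)
    · rw [dist_comm]
      exact hρ a b (by rw [Subtype.dist_eq, dist_comm]; linarith)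
  let U := ⋃ a : A, ball (a : X) (ρ a / 2)
  refine ⟨U, isOpen_iUnion fun _ => isOpen_ball,
    fun a ha => mem_iUnion.2 ⟨⟨a, ha⟩, mem_ball_self (half_pos (hρ_pos _))⟩, ?_⟩
  obtain ⟨g, hg⟩ := exists_continuous_forall_mem_convex_of_local_const
      (t := fun x : U => convexHull ℝ (Φ '' {a | dist (x : X) a < ρ a / 2}))
      (fun _ => convex_convexHull ℝ _) fun x => by
    obtain ⟨a, ha⟩ := mem_iUnion.1 x.2
    refine ⟨Φ a, ?_⟩
    filter_upwards [(isOpen_ball.preimage continuous_subtype_val).mem_nhds ha] with y hy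
    exact subset_convexHull ℝ _ (mem_image_of_mem Φ hy)
  refine ⟨g, fun x => ⟨convexHull_mono (image_subset_range _ _) (hg x), ?_⟩⟩
  obtain ⟨a, ha⟩ := mem_iUnion.1 x.2
  refine ⟨a, ha.trans_le (by linarith [hρ_le a, hρ_pos a]),
    convexHull_min ?_ (convex_closedBall _ _) (hg x)⟩
  rintro _ ⟨b, hb, rfl⟩
  exact hnear x b a hb ha

theorem ContinuousMap.homotopic_of_retraction {X Y E : Type*} [TopologicalSpace X]
    [TopologicalSpace Y] [TopologicalSpace E] {W : Set E} (r : C(W, X)) {f₀ f₁ : C(Y, X)}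
    (H : C(I × Y, E)) (hH : ∀ z, H z ∈ W) (h₀ : ∀ y, r ⟨H (0, y), hH _⟩ = f₀ y)
    (h₁ : ∀ y, r ⟨H (1, y), hH _⟩ = f₁ y) : f₀.Homotopic f₁ :=
  ⟨{ toContinuousMap := r.comp ⟨fun z => ⟨H z, hH z⟩, by fun_prop⟩
     map_zero_left := h₀
     map_one_left := h₁ }⟩

theorem ContinuousMap.Homotopy.exists_approx_extension {X E : Type*} [MetricSpace X]
    [SeminormedAddCommGroup E] [NormedSpace ℝ E] {ι : X → E} (hι : Isometry ι) {δ : ℝ} (hδ : 0 < δ)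
    {A : Set X} {y : X} (F : (ContinuousMap.setInclusion A).Homotopy (ContinuousMap.const A y)) :
    ∃ U : Set X, IsOpen U ∧ A ⊆ U ∧ ∃ g : C(U, C(I, E)), ∀ x : U,
      (∀ t, g x t ∈ thickening δ (range ι)) ∧ dist (ι x) (g x 0) < δ ∧ g x 1 = ι y := by
  let Φ : C(A, C(I, E)) :=
    (ContinuousMap.comp ⟨ι, hι.continuous⟩
      (F.toContinuousMap.comp ⟨Prod.swap, continuous_swap⟩)).curry
  obtain ⟨U, hU, hAU, g, hg⟩ := exists_approx_extension_mem_convexHull Φ (half_pos hδ)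
  have hΦ_one : convexHull ℝ (range Φ) ⊆ {γ | γ 1 = ι y} :=
    convexHull_min (by rintro _ ⟨a, rfl⟩; exact congrArg ι (F.apply_one a))
      ((convex_singleton (ι y)).linear_preimage (ContinuousMap.evalCLM ℝ 1).toLinearMap)
  refine ⟨U, hU, hAU, g, fun x => ?_⟩
  obtain ⟨a, hxa, ha⟩ := (hg x).2
  have hΦa : Φ a 0 = ι a := congrArg ι (F.apply_zero a)
  refine ⟨fun t => mem_thickening_iff.2 ⟨_, mem_range_self (F (t, a)), ?_⟩, ?_, hΦ_one (hg x).1⟩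
  · exact ((ContinuousMap.dist_apply_le_dist t).trans ha).trans_lt (half_lt_self hδ)
  · calc dist (ι x) (g x 0) ≤ dist (ι x) (Φ a 0) + dist (Φ a 0) (g x 0) := dist_triangle _ _ _
      _ < δ / 2 + δ / 2 := add_lt_add_of_lt_of_le (by rw [hΦa, hι.dist_eq]; exact hxa)
        (by rw [dist_comm]; exact (ContinuousMap.dist_apply_le_dist 0).trans ha)
      _ = δ := add_halves δ

theorem ContractibleIn.exists_isOpen_superset_of_retraction {X E : Type*} [MetricSpace X]
    [SeminormedAddCommGroup E] [NormedSpace ℝ E] {ι : X → E} (hι : Isometry ι) {δ : ℝ} (hδ : 0 < δ)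
    (r : C(thickening δ (range ι), X))
    (hr : ∀ x, r ⟨ι x, self_subset_thickening hδ _ (mem_range_self x)⟩ = x)
    {A : Set X} (hA : ContractibleIn A) : ∃ U, IsOpen U ∧ A ⊆ U ∧ ContractibleIn U := by
  obtain ⟨y, ⟨F⟩⟩ := hA
  obtain ⟨U, hU, hAU, g, hg⟩ := F.exists_approx_extension hι hδ
  let g₀ : C(U, E) := ⟨fun x => g x 0, by fun_prop⟩
  let m : C(U, X) := r.comp ⟨fun x => ⟨g₀ x, (hg x).1 0⟩, by fun_prop⟩
  have h_incl : (ContinuousMap.setInclusion U).Homotopic m := by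
    let S := ContinuousMap.Homotopy.affine
      (ContinuousMap.comp ⟨ι, hι.continuous⟩ (ContinuousMap.setInclusion U)) g₀
    refine ContinuousMap.homotopic_of_retraction r S
      (fun z => mem_thickening_iff.2 ⟨_, mem_range_self (z.2 : X), ?_⟩)
      (fun x => (congrArg r (Subtype.ext (S.apply_zero x))).trans (hr x))
      fun x => congrArg r (Subtype.ext (S.apply_one x))
    change dist (AffineMap.lineMap (ι z.2) (g z.2 0) (z.1 : ℝ)) (ι z.2) < δ
    rw [dist_lineMap_left, Real.norm_of_nonneg z.1.2.1]
    exact (mul_le_of_le_one_left dist_nonneg z.1.2.2).trans_lt (hg z.2).2.1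
  have h_const : m.Homotopic (ContinuousMap.const U y) :=
    ContinuousMap.homotopic_of_retraction r (g.uncurry.comp ⟨Prod.swap, continuous_swap⟩)
      (fun z => (hg z.2).1 z.1) (fun _ => rfl)
      fun x => (congrArg r (Subtype.ext (hg x).2.2)).trans (hr y)
  exact ⟨U, hU, hAU, y, h_incl.trans h_const⟩

noncomputable def kuratowskiMap (X : Type*) [MetricSpace X] [CompactSpace X] : X → X →ᵇ ℝ :=
  fun x => BoundedContinuousFunction.mkOfCompact ⟨dist x, continuous_const.dist continuous_id⟩

theorem isometry_kuratowskiMap (X : Type*) [MetricSpace X] [CompactSpace X] :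
    Isometry (kuratowskiMap X) := by
  refine Isometry.of_dist_eq fun x x' => le_antisymm ?_ ?_
  · refine (BoundedContinuousFunction.dist_le dist_nonneg).2 fun y => ?_
    simpa [kuratowskiMap, Real.dist_eq] using abs_dist_sub_le x x' y
  · calc dist x x' = dist (kuratowskiMap X x x') (kuratowskiMap X x' x') := by
          simp [kuratowskiMap]
      _ ≤ dist (kuratowskiMap X x) (kuratowskiMap X x') :=
          BoundedContinuousFunction.dist_coe_le_dist x'

theorem IsANR.exists_retraction_thickening {X : Type u} [MetricSpace X] [CompactSpace X]
    (hX : IsANR X) : ∃ δ, ∃ hδ : 0 < δ, ∃ r : C(thickening δ (range (kuratowskiMap X)), X),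
      ∀ x, r ⟨kuratowskiMap X x, self_subset_thickening hδ _ (mem_range_self x)⟩ = x := by
  have hι := isometry_kuratowskiMap X
  obtain ⟨W, hW, hιW, r, hr⟩ := hX.2 _ (kuratowskiMap X) hι.isClosedEmbedding
  obtain ⟨δ, hδ, hδW⟩ := (isCompact_range hι.continuous).exists_thickening_subset_open hW
    (range_subset_iff.2 hιW)
  exact ⟨δ, hδ, r.comp ⟨inclusion hδW, continuous_inclusion hδW⟩, hr⟩

theorem ContractibleIn.exists_isOpen_superset {X : Type u} [MetricSpace X] [CompactSpace X]
    (hX : IsANR X) {A : Set X} (hA : ContractibleIn A) :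
    ∃ U, IsOpen U ∧ A ⊆ U ∧ ContractibleIn U := by
  obtain ⟨δ, hδ, r, hr⟩ := hX.exists_retraction_thickening
  exact hA.exists_isOpen_superset_of_retraction (isometry_kuratowskiMap X) hδ r hr

theorem catg_eq_lsCat_of_forall_contractibleIn {X : Type*} [TopologicalSpace X]
    (h : ∀ A : Set X, ContractibleIn A → ∃ U, IsOpen U ∧ A ⊆ U ∧ ContractibleIn U) :
    catg X = lsCat X := by
  unfold catg lsCat
  congr 1
  ext N
  refine ⟨fun ⟨k, hk, A, hcov, hA⟩ => ?_, fun ⟨k, hk, A, _, hcov, hA⟩ => ⟨k, hk, A, hcov, hA⟩⟩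
  choose U hU hAU hUc using fun i => h (A i) (hA i)
  exact ⟨k, hk, U, hU, eq_univ_of_univ_subset (hcov ▸ iUnion_mono hAU), hUc⟩

/-- For a compact metric ANR `X`, `cat_g X = cat X`. -/
theorem catg_eq_lsCat (X : Type u) [MetricSpace X] [CompactSpace X] (hX : IsANR X) :
    catg X = lsCat X :=
  catg_eq_lsCat_of_forall_contractibleIn fun _ hA => hA.exists_isOpen_superset hX
end

section
/- If f : X → Y is a homotopy equivalence of topological spaces, then cat_g X = cat_g Y. -/
/-! If `g : Y → X` has a homotopy left inverse `f`, pulling back a cover of `X` by sets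
contractible in `X` along `g` gives a cover of `Y` by sets contractible in `Y`: on `g⁻¹' A`
the inclusion into `Y` is homotopic to `f ∘ g`, which factors through the inclusion of `A`.
So `cat_g Y ≤ cat_g X`, and a homotopy equivalence gives both inequalities. -/

theorem ContinuousMap.Nullhomotopic.of_homotopic {X Y : Type*} [TopologicalSpace X]
    [TopologicalSpace Y] {f₀ f₁ : C(X, Y)} (hf₁ : f₁.Nullhomotopic) (h : f₀.Homotopic f₁) :
    f₀.Nullhomotopic :=
  let ⟨y, hy⟩ := hf₁
  ⟨y, h.trans hy⟩

theorem ContractibleIn.preimage {X Y : Type*} [TopologicalSpace X] [TopologicalSpace Y]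
    {A : Set X} (hA : ContractibleIn A) {f : C(X, Y)} {g : C(Y, X)}
    (hfg : (f.comp g).Homotopic (ContinuousMap.id Y)) : ContractibleIn (g ⁻¹' A) := by
  have hfactor : (f.comp g).comp (ContinuousMap.setInclusion (g ⁻¹' A)) =
      f.comp ((ContinuousMap.setInclusion A).comp (g.restrictPreimage A)) := rfl
  have hnull : ((f.comp g).comp (ContinuousMap.setInclusion (g ⁻¹' A))).Nullhomotopic := by
    rw [hfactor]
    exact (hA.comp_left _).comp_right f
  exact hnull.of_homotopic (hfg.symm.comp (.refl (ContinuousMap.setInclusion (g ⁻¹' A))))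

theorem catg_le_of_homotopic_id {X Y : Type*} [TopologicalSpace X] [TopologicalSpace Y]
    {f : C(X, Y)} {g : C(Y, X)} (hfg : (f.comp g).Homotopic (ContinuousMap.id Y)) :
    catg Y ≤ catg X := by
  refine sInf_le_sInf ?_
  rintro _ ⟨k, rfl, A, hcover, hA⟩
  refine ⟨k, rfl, fun i => g ⁻¹' A i, ?_, fun i => (hA i).preimage hfg⟩
  rw [← Set.preimage_iUnion, hcover, Set.preimage_univ]

/-- If `f : X → Y` is a homotopy equivalence, then
`cat_g X = cat_g Y`. -/
theorem catg_eq_of_homotopyEquiv {X : Type u} {Y : Type v}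
    [TopologicalSpace X] [TopologicalSpace Y] (f : C(X, Y))
    (hf : ∃ g : C(Y, X), (f.comp g).Homotopic (ContinuousMap.id Y) ∧
      (g.comp f).Homotopic (ContinuousMap.id X)) :
    catg X = catg Y := by
  obtain ⟨g, hfg, hgf⟩ := hf
  exact le_antisymm (catg_le_of_homotopic_id hgf) (catg_le_of_homotopic_id hfg)
end

section
/- Let X be a complete metric space and A ⊆ X a subset that is contractible in X. Then there exists a G_δ set B with A ⊆ B ⊆ X such that B is contractible in X. -/
open Filter Topology Set Metric TopologicalSpace unitInterval

section Oscillation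

variable {Z Y : Type*} [TopologicalSpace Z] [PseudoEMetricSpace Y]

theorem isOpen_setOf_oscillationWithin_lt (f : Z → Y) (S : Set Z) (ε : ENNReal) :
    IsOpen {z | oscillationWithin f S z < ε} := by
  refine isOpen_iff_forall_mem_open.2 fun z hz => ?_
  simp only [mem_ofPred_eq, oscillationWithin, iInf_lt_iff, mem_map] at hz
  obtain ⟨T, hT, hTε⟩ := hz
  obtain ⟨U, hU, hzU, hUT⟩ := mem_nhdsWithin.1 hT
  refine ⟨U, fun y hy => ?_, hU, hzU⟩
  have : T ∈ (𝓝[S] y).map f := mem_nhdsWithin.2 ⟨U, hU, hy, hUT⟩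
  exact (biInf_le ediam this).trans_lt hTε

theorem isGδ_setOf_oscillationWithin_eq_zero (f : Z → Y) (S : Set Z) :
    IsGδ {z | oscillationWithin f S z = 0} := by
  have : {z | oscillationWithin f S z = 0} =
      ⋂ n : ℕ, {z | oscillationWithin f S z < (n : ENNReal)⁻¹} := by
    ext z
    simp only [mem_ofPred_eq, mem_iInter]
    refine ⟨fun h n => by simp [h], fun h => ?_⟩
    by_contra hne
    obtain ⟨n, hn⟩ := ENNReal.exists_inv_nat_lt hne
    exact (h n).not_gt hn
  rw [this]
  exact .iInter_of_isOpen fun n => isOpen_setOf_oscillationWithin_lt f S _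

theorem cauchy_map_nhdsWithin_of_oscillationWithin_eq_zero {f : Z → Y} {S : Set Z} {z : Z}
    (hz : z ∈ closure S) (hf : oscillationWithin f S z = 0) : Cauchy ((𝓝[S] z).map f) := by
  have := mem_closure_iff_nhdsWithin_neBot.1 hz
  refine EMetric.cauchy_iff.2 ⟨(map_neBot).ne, fun ε hε => ?_⟩
  rw [← hf] at hε
  simp only [oscillationWithin, iInf_lt_iff] at hε
  obtain ⟨T, hT, hTε⟩ := hε
  exact ⟨T, hT, fun x hx y hy => (edist_le_ediam_of_mem hx hy).trans_lt hTε⟩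

theorem continuousOn_extendFrom_of_oscillationWithin_eq_zero [CompleteSpace Y] (f : Z → Y)
    (S : Set Z) :
    ContinuousOn (extendFrom S f) (closure S ∩ {z | oscillationWithin f S z = 0}) :=
  continuousOn_extendFrom inter_subset_left fun _ hz =>
    CompleteSpace.complete (cauchy_map_nhdsWithin_of_oscillationWithin_eq_zero hz.1 hz.2)

end Oscillation

theorem ContinuousOn.exists_isGδ_continuousOn_extendFrom {Z Y : Type*} [TopologicalSpace Z]
    [PseudoMetrizableSpace Z] [PseudoEMetricSpace Y] [CompleteSpace Y] {f : Z → Y} {S : Set Z}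
    (hf : ContinuousOn f S) :
    ∃ G, S ⊆ G ∧ IsGδ G ∧ ContinuousOn (extendFrom S f) G :=
  ⟨closure S ∩ {z | oscillationWithin f S z = 0},
    fun z hz => ⟨subset_closure hz, (hf z hz).oscillationWithin_eq_zero⟩,
    isClosed_closure.isGδ.inter (isGδ_setOf_oscillationWithin_eq_zero f S),
    continuousOn_extendFrom_of_oscillationWithin_eq_zero f S⟩

section Tube

variable {T X : Type*} [TopologicalSpace T] [TopologicalSpace X] [CompactSpace T]

theorem IsOpen.setOf_forall_prodMk {U : Set (T × X)} (hU : IsOpen U) :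
    IsOpen {x | ∀ t, (t, x) ∈ U} := by
  have : {x | ∀ t, (t, x) ∈ U} = (Prod.snd '' Uᶜ)ᶜ := by
    ext x
    simp
  rw [this]
  exact (isClosedMap_snd_of_compactSpace _ hU.isClosed_compl).isOpen_compl

theorem IsGδ.setOf_forall_prodMk {G : Set (T × X)} (hG : IsGδ G) :
    IsGδ {x | ∀ t, (t, x) ∈ G} := by
  obtain ⟨U, hU, rfl⟩ := isGδ_iff_eq_iInter_nat.1 hG
  have : {x | ∀ t, (t, x) ∈ ⋂ n, U n} = ⋂ n, {x | ∀ t, (t, x) ∈ U n} := by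
    ext x
    simp only [mem_ofPred_eq, mem_iInter]
    exact forall_comm
  rw [this]
  exact .iInter_of_isOpen fun n => (hU n).setOf_forall_prodMk

end Tube

theorem IsGδ.sep_eq {X Y : Type*} [TopologicalSpace X] [PseudoMetrizableSpace X]
    [TopologicalSpace Y] [T2Space Y] {s : Set X} {f g : X → Y} (hs : IsGδ s)
    (hf : ContinuousOn f s) (hg : ContinuousOn g s) : IsGδ {x ∈ s | f x = g x} := by
  have hclosed : IsClosed {x : s | f x = g x} :=
    isClosed_eq (continuousOn_iff_continuous_domRestrict.1 hf)
      (continuousOn_iff_continuous_domRestrict.1 hg)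
  obtain ⟨K, hK, hKeq⟩ := isClosed_induced_iff.1 hclosed
  have : {x ∈ s | f x = g x} = s ∩ K :=
    Set.ext fun x => and_congr_right fun hx => (Set.ext_iff.1 hKeq ⟨x, hx⟩).symm
  rw [this]
  exact hs.inter hK.isGδ

theorem contractibleIn_iff_exists_continuousOn {X : Type*} [TopologicalSpace X] {A : Set X} :
    ContractibleIn A ↔ ∃ c : X, ∃ H : I × X → X, ContinuousOn H (univ ×ˢ A) ∧
      ∀ x ∈ A, H (0, x) = x ∧ H (1, x) = c := by
  classical
  constructor
  · rintro ⟨c, ⟨F⟩⟩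
    refine ⟨c, fun p => if h : p.2 ∈ A then F (p.1, ⟨p.2, h⟩) else c, ?_, fun x hx => ?_⟩
    · rw [continuousOn_iff_continuous_domRestrict]
      exact (F.continuous.comp (f := fun p : ↥(univ ×ˢ A) => (p.1.1, ⟨p.1.2, p.2.2⟩))
        (by fun_prop)).congr fun p => by simp [p.2.2]
    · simp only [hx, dite_true]
      exact ⟨F.apply_zero ⟨x, hx⟩, F.apply_one ⟨x, hx⟩⟩
  · rintro ⟨c, H, hH, hH_ends⟩
    exact ⟨c, ⟨{
      toFun := fun p => H (p.1, p.2)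
      continuous_toFun := hH.comp_continuous (by fun_prop) fun p => ⟨mem_univ _, p.2.2⟩
      map_zero_left := fun x => (hH_ends x x.2).1
      map_one_left := fun x => (hH_ends x x.2).2 }⟩⟩

/-- Let `X` be a complete metric space and `A ⊆ X` contractible in
`X`. Then there is a `G_δ` set `B` with `A ⊆ B ⊆ X` that is contractible in `X`. -/
theorem exists_Gdelta_contractibleIn {X : Type u} [MetricSpace X] [CompleteSpace X]
    (A : Set X) (hA : ContractibleIn A) :
    ∃ B : Set X, A ⊆ B ∧ IsGδ B ∧ ContractibleIn B := by
  obtain ⟨c, H, hH, hH_ends⟩ := contractibleIn_iff_exists_continuousOn.1 hA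
  obtain ⟨G, hSG, hG, hg⟩ := hH.exists_isGδ_continuousOn_extendFrom
  set g := extendFrom (univ ×ˢ A) H
  set T := {x | ∀ t, (t, x) ∈ G}
  have hgT : ∀ t, ContinuousOn (fun x => g (t, x)) T :=
    fun t => hg.comp (by fun_prop) fun x hx => hx t
  have hgH : ∀ p ∈ univ ×ˢ A, g p = H p := extendFrom_extends hH
  have hg_ends : ∀ x ∈ A, g (0, x) = x ∧ g (1, x) = c := fun x hx =>
    ⟨(hgH (0, x) ⟨mem_univ _, hx⟩).trans (hH_ends x hx).1,
      (hgH (1, x) ⟨mem_univ _, hx⟩).trans (hH_ends x hx).2⟩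
  refine ⟨{x ∈ T | (g (0, x), g (1, x)) = (x, c)}, fun x hx => ⟨fun t => hSG ⟨mem_univ t, hx⟩,
    Prod.ext_iff.2 (hg_ends x hx)⟩, ?_, ?_⟩
  · exact hG.setOf_forall_prodMk.sep_eq ((hgT 0).prodMk (hgT 1))
      (continuousOn_id.prodMk continuousOn_const)
  · refine contractibleIn_iff_exists_continuousOn.2
      ⟨c, g, hg.mono ?_, fun x hx => Prod.ext_iff.1 hx.2⟩
    rintro ⟨t, x⟩ ⟨-, hx⟩
    exact hx.1 t
end

section
/- (Kolmogorov–Ostrand Lemma) Let A_0, …, A_{m+n} be an (n+1)-cover of a set X and let B_0, …, B_{m+n} be an (m+1)-cover of a set Y. Then the family A_0 × B_0, …, A_{m+n} × B_{m+n} is a cover of X × Y, i.e., ⋃_{i=0}^{m+n} (A_i × B_i) = X × Y. -/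
/-!
A point `x` misses fewer than `n + 1` of the sets of an `(n + 1)`-cover, since otherwise
`n + 1` of the missed sets would form a subfamily not covering `x`. So `x` misses at most `n`
of the `A i` and `y` misses at most `m` of the `B i`; among `m + n + 1` indices some `i` is
missed by neither, and then `(x, y) ∈ A i ×ˢ B i`.
-/

open Finset

variable {ι X Y : Type*}

def IsNCover (A : ι → Set X) (n : ℕ) : Prop :=
  ∀ s : Finset ι, #s = n → ⋃ i ∈ s, A i = Set.univ

namespace IsNCover

theorem card_filter_notMem_lt [Fintype ι] {A : ι → Set X} {n : ℕ} (hA : IsNCover A n) (x : X)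
    [DecidablePred (x ∉ A ·)] : #{i | x ∉ A i} < n := by
  by_contra! hle
  obtain ⟨s, hs, hcard⟩ := exists_subset_card_eq hle
  obtain ⟨i, hi, hxi⟩ := Set.mem_iUnion₂.mp (hA s hcard ▸ Set.mem_univ x)
  exact (mem_filter.mp (hs hi)).2 hxi

theorem iUnion_prod_eq_univ [Fintype ι] {A : ι → Set X} {B : ι → Set Y} {m n : ℕ}
    (hA : IsNCover A (n + 1)) (hB : IsNCover B (m + 1)) (hcard : m + n < Fintype.card ι) :
    ⋃ i, A i ×ˢ B i = Set.univ := by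
  classical
  refine Set.eq_univ_of_forall fun ⟨x, y⟩ => ?_
  let missA : Finset ι := {i | x ∉ A i}
  let missB : Finset ι := {i | y ∉ B i}
  have hmiss : #(missA ∪ missB) < #(univ : Finset ι) :=
    calc #(missA ∪ missB)
        ≤ #missA + #missB := card_union_le _ _
      _ < Fintype.card ι := by
        have hxA : #missA < n + 1 := hA.card_filter_notMem_lt x
        have hyB : #missB < m + 1 := hB.card_filter_notMem_lt y
        omega
      _ = #(univ : Finset ι) := card_univ.symm
  obtain ⟨i, -, hi⟩ := exists_mem_notMem_of_card_lt_card hmiss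
  simp only [missA, missB, mem_union, mem_filter, mem_univ, true_and, not_or, not_not] at hi
  exact Set.mem_iUnion.mpr ⟨i, hi⟩

end IsNCover

/-- **Kolmogorov–Ostrand Lemma.** If `A_0, …, A_{m+n}` is an
`(n+1)`-cover of `X` (every `n+1` of the sets cover `X`) and `B_0, …, B_{m+n}` is an
`(m+1)`-cover of `Y`, then the products `A_i × B_i` cover `X × Y`. -/
theorem kolmogorov_ostrand {X : Type u} {Y : Type v} (m n : ℕ)
    (A : Fin (m + n + 1) → Set X) (B : Fin (m + n + 1) → Set Y)
    (hA : ∀ s : Finset (Fin (m + n + 1)), s.card = n + 1 → (⋃ i ∈ s, A i) = Set.univ)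
    (hB : ∀ s : Finset (Fin (m + n + 1)), s.card = m + 1 → (⋃ i ∈ s, B i) = Set.univ) :
    (⋃ i, A i ×ˢ B i) = Set.univ :=
  IsNCover.iUnion_prod_eq_univ hA hB (by simp)
end
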